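/- arXiv:0810.1981 — 3 statements merged into one kernel-verified Lean document; each statement's English description precedes it below -/
import Mathlib

section
/- Every n-uniform hypergraph with maximum neighborhood size at most 2^(n-3)/n has a proper halving 2-coloring, i.e., a proper 2-coloring in which the numbers of vertices of the two colors differ by at most 1. -/
open Finset Function Real

/-!
Pair up the vertices by an involution `p` with at most one fixed point and give the two vertices
of each pair different colors: every such coloring is halving, so it remains to make it proper.

For `n ≤ 7` the bound on the maximum neighborhood size `D` forces `2D + 2 ≤ n`. Since at most `2D`
vertices of an edge lie in pairs chosen inside its neighbors, a pair inside every edge can be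
chosen greedily.

For `n ≥ 8` fix any such pairing and color each pair at random. An edge is monochromatic with
probability at most `2^(1-n)`, and this event is determined by the pairs meeting the edge, so it
shares coordinates with at most `d = D + n(D + 1)` other events. The symmetric Lovász local lemma,
in its counting form for events on `ι → Bool`, applies with `x = 1/(d + 1)` because
`e (d + 1) ≤ 2^(n-1)`.
-/

namespace LocalLemma

variable {ι κ : Type*} [Fintype ι] [DecidableEq ι]

lemma card_inter_mul_eq {A B : Finset (ι → Bool)} {C : Finset ι}
    (hA : DependsOn (· ∈ A) (C : Set ι)) (hB : DependsOn (· ∈ B) (C : Set ι)ᶜ) :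
    #(A ∩ B) * 2 ^ Fintype.card ι = #A * #B := by
  let Φ : (ι → Bool) × (ι → Bool) → (ι → Bool) × (ι → Bool) := fun q =>
    (C.piecewise q.1 q.2, C.piecewise q.2 q.1)
  have hΦ : ∀ q, Φ (Φ q) = q := fun q => by
    ext i <;> by_cases hi : i ∈ C <;> simp [Φ, hi]
  calc #(A ∩ B) * 2 ^ Fintype.card ι = #((A ∩ B) ×ˢ (univ : Finset (ι → Bool))) := by
        simp [card_product]
    _ = #(A ×ˢ B) := by
        refine card_bij' (fun q _ => Φ q) (fun q _ => Φ q) ?_ ?_ (fun q _ => hΦ q)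
          (fun q _ => hΦ q) <;>
        · rintro ⟨b, b'⟩ hq
          simp only [mem_product, mem_inter, mem_univ, and_true] at hq ⊢
          exact ⟨(hA fun i hi => (C.piecewise_eq_of_mem _ _ hi).symm).mp hq.1,
            (hB fun i hi => (C.piecewise_eq_of_notMem _ _ hi).symm).mp hq.2⟩
    _ = #A * #B := card_product A B

lemma pow_card_mul_le_of_step [DecidableEq κ] (W : Finset κ → ℝ) {r : ℝ} (hr : 0 ≤ r)
    (T U : Finset κ)
    (hstep : ∀ U' ⊆ U, ∀ f ∈ U, f ∉ U' → r * W (T ∪ U') ≤ W (insert f (T ∪ U'))) :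
    r ^ #U * W T ≤ W (T ∪ U) := by
  induction U using Finset.induction_on with
  | empty => simp
  | insert f U hfU ih =>
    have ih := ih fun U' hU' g hg => hstep U' (hU'.trans (subset_insert f U)) g
      (mem_insert_of_mem hg)
    calc r ^ #(insert f U) * W T = r * (r ^ #U * W T) := by
          rw [card_insert_of_notMem hfU, pow_succ]; ring
      _ ≤ r * W (T ∪ U) := mul_le_mul_of_nonneg_left ih hr
      _ ≤ W (T ∪ insert f U) := by
          rw [union_insert]; exact hstep U (subset_insert f U) f (mem_insert_self f U) hfU

def avoiding (A : κ → Finset (ι → Bool)) (S : Finset κ) : Finset (ι → Bool) :=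
  {b | ∀ j ∈ S, b ∉ A j}

variable {A : κ → Finset (ι → Bool)}

lemma avoiding_anti {S T : Finset κ} (h : S ⊆ T) : avoiding A T ⊆ avoiding A S :=
  fun _ hb => by
    simp only [avoiding, mem_filter, mem_univ, true_and] at hb ⊢
    exact fun j hj => hb j (h hj)

lemma dependsOn_avoiding {C : κ → Finset ι} {S : Finset κ}
    (hA : ∀ f ∈ S, DependsOn (· ∈ A f) (C f : Set ι)) {T : Set ι}
    (hT : ∀ f ∈ S, (C f : Set ι) ⊆ T) : DependsOn (· ∈ avoiding A S) T := fun b b' h => by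
  simp only [avoiding, mem_filter, mem_univ, true_and]
  exact propext <| forall₂_congr fun f hf => not_congr (iff_of_eq ((hA f hf).mono (hT f hf) h))

lemma one_sub_mul_card_avoiding_le [DecidableEq κ] {S : Finset κ} {j : κ} {x : ℝ}
    (h : (#(avoiding A S ∩ A j) : ℝ) ≤ x * #(avoiding A S)) :
    (1 - x) * #(avoiding A S) ≤ #(avoiding A (insert j S)) := by
  have hsplit : #(avoiding A (insert j S)) + #(avoiding A S ∩ A j) = #(avoiding A S) := by
    rw [← filter_mem_eq_inter,
      ← card_filter_add_card_filter_not (s := avoiding A S) (· ∉ A j)]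
    simp only [avoiding, filter_filter, forall_mem_insert, not_not]
    congr 3
    ext b
    tauto
  have : (#(avoiding A (insert j S)) : ℝ) + #(avoiding A S ∩ A j) = #(avoiding A S) := by
    exact_mod_cast hsplit
  linarith

variable (A) [DecidableEq κ] (J : Finset κ) (C : κ → Finset ι)

theorem card_avoiding_inter_le (hA : ∀ j ∈ J, DependsOn (· ∈ A j) (C j : Set ι))
    {x : ℝ} (hx0 : 0 ≤ x) (hx1 : x ≤ 1) {d : ℕ}
    (hcard : ∀ j ∈ J, (#(A j) : ℝ) ≤ x * (1 - x) ^ d * 2 ^ Fintype.card ι)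
    (hdeg : ∀ j ∈ J, #{f ∈ J | f ≠ j ∧ ¬Disjoint (C f) (C j)} ≤ d)
    (S : Finset κ) (hSJ : S ⊆ J) {j : κ} (hj : j ∈ J) (hjS : j ∉ S) :
    (#(avoiding A S ∩ A j) : ℝ) ≤ x * #(avoiding A S) := by
  induction S using Finset.strongInduction generalizing j with
  | H S ih =>
  set S₂ := {f ∈ S | Disjoint (C f) (C j)}
  set S₁ := {f ∈ S | ¬Disjoint (C f) (C j)}
  have hS : S₂ ∪ S₁ = S := filter_union_filter_not_eq _ S
  have hS₁ : #S₁ ≤ d := (card_le_card fun f hf => by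
    simp only [S₁, mem_filter] at hf ⊢
    exact ⟨hSJ hf.1, fun h => hjS (h ▸ hf.1), hf.2⟩).trans (hdeg j hj)
  -- `A j` is independent of the events of `S₂`; each event of `S₁` costs a factor `1 - x`.
  have hchain : (1 - x) ^ #S₁ * #(avoiding A S₂) ≤ (#(avoiding A S) : ℝ) := by
    rw [← hS]
    refine pow_card_mul_le_of_step (fun T => (#(avoiding A T) : ℝ)) (by linarith) S₂ S₁
      fun U hU f hf hfU => ?_
    have hf' : f ∈ S ∧ ¬Disjoint (C f) (C j) := mem_filter.1 hf
    have hsub : S₂ ∪ U ⊆ S := union_subset (filter_subset _ _) (hU.trans (filter_subset _ _))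
    have hfnot : f ∉ S₂ ∪ U := by simp [S₂, hf'.2, hfU]
    exact one_sub_mul_card_avoiding_le (ih _ ((ssubset_iff_of_subset hsub).2 ⟨f, hf'.1, hfnot⟩)
      (hsub.trans hSJ) (hSJ hf'.1) hfnot)
  have hindep : #(A j ∩ avoiding A S₂) * 2 ^ Fintype.card ι = #(A j) * #(avoiding A S₂) :=
    card_inter_mul_eq (hA j hj) <| dependsOn_avoiding (fun f hf => hA f (hSJ (mem_filter.1 hf).1))
      fun f hf => Set.subset_compl_iff_disjoint_right.2 (by exact_mod_cast (mem_filter.1 hf).2)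
  have h2m : (0 : ℝ) < 2 ^ Fintype.card ι := by positivity
  calc (#(avoiding A S ∩ A j) : ℝ) ≤ #(A j ∩ avoiding A S₂) := by
        rw [inter_comm]
        exact_mod_cast card_le_card (inter_subset_inter_left (avoiding_anti (filter_subset _ S)))
    _ = #(A j) * #(avoiding A S₂) / 2 ^ Fintype.card ι := by
        rw [eq_div_iff h2m.ne']; exact_mod_cast hindep
    _ ≤ x * (1 - x) ^ d * #(avoiding A S₂) := by
        rw [div_le_iff₀ h2m]
        nlinarith [hcard j hj, (Nat.cast_nonneg _ : (0 : ℝ) ≤ #(avoiding A S₂))]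
    _ ≤ x * ((1 - x) ^ #S₁ * #(avoiding A S₂)) := by
        rw [mul_assoc x]
        have := pow_le_pow_of_le_one (by linarith : 0 ≤ 1 - x) (by linarith) hS₁
        gcongr
    _ ≤ x * #(avoiding A S) := by gcongr

theorem exists_forall_notMem (hA : ∀ j ∈ J, DependsOn (· ∈ A j) (C j : Set ι))
    {x : ℝ} (hx0 : 0 ≤ x) (hx1 : x < 1) {d : ℕ}
    (hcard : ∀ j ∈ J, (#(A j) : ℝ) ≤ x * (1 - x) ^ d * 2 ^ Fintype.card ι)
    (hdeg : ∀ j ∈ J, #{f ∈ J | f ≠ j ∧ ¬Disjoint (C f) (C j)} ≤ d) :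
    ∃ b : ι → Bool, ∀ j ∈ J, b ∉ A j := by
  have hJ := pow_card_mul_le_of_step (fun T => (#(avoiding A T) : ℝ)) (by linarith) ∅ J
    fun U hU f hf hfU => one_sub_mul_card_avoiding_le <| by
      simpa using card_avoiding_inter_le A J C hA hx0 hx1.le hcard hdeg U hU hf hfU
  have hpos : 0 < #(avoiding A J) := by
    have : (0 : ℝ) < (1 - x) ^ #J * 2 ^ Fintype.card ι := by
      have : (0 : ℝ) < 1 - x := by linarith
      positivity
    have hempty : avoiding A (∅ : Finset κ) = univ := by simp [avoiding]
    rw [hempty, empty_union, card_univ, Fintype.card_fun, Fintype.card_bool] at hJ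
    push_cast at hJ
    exact_mod_cast this.trans_le hJ
  obtain ⟨b, hb⟩ := card_pos.1 hpos
  exact ⟨b, (mem_filter.1 hb).2⟩

end LocalLemma

lemma card_filter_forall_apply_eq_mul_le {ι α : Type*} [Fintype ι] [DecidableEq ι]
    (r : α → ι) (g : α → Bool) (s : Finset α) :
    #{b : ι → Bool | ∀ a ∈ s, b (r a) = g a} * 2 ^ #(s.image r) ≤ 2 ^ Fintype.card ι := by
  set T : ι → Finset Bool := fun i => {β | ∀ a ∈ s, r a = i → β = g a}
  have hpi : ({b : ι → Bool | ∀ a ∈ s, b (r a) = g a} : Finset _) = Fintype.piFinset T := by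
    ext b
    simp only [mem_filter, mem_univ, true_and, Fintype.mem_piFinset, T]
    exact ⟨fun h i a ha hai => hai ▸ h a ha, fun h a ha => h _ a ha rfl⟩
  have hT (i : ι) : #(T i) * (if i ∈ s.image r then 2 else 1) ≤ 2 := by
    split_ifs with hi
    · obtain ⟨a, ha, rfl⟩ := mem_image.1 hi
      have : #(T (r a)) ≤ 1 := card_le_one.2 fun β hβ β' hβ' => by
        simp only [T, mem_filter] at hβ hβ'
        rw [hβ.2 a ha rfl, hβ'.2 a ha rfl]
      omega
    · simpa using card_le_univ (T i)
  rw [hpi, Fintype.card_piFinset, ← prod_const (2 : ℕ), ← univ_inter (s.image r),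
    ← prod_ite_mem univ, ← prod_mul_distrib, ← card_univ, ← prod_const (2 : ℕ)]
  exact prod_le_prod' fun i _ => hT i

section Pairing

variable {V : Type*} {p : V → V}

lemma involutive_swap_comp [DecidableEq V] (hp : Involutive p) {a b : V} (ha : p a = a)
    (hb : p b = b) : Involutive (Equiv.swap a b ∘ p) := fun v => by
  by_cases hva : v = a
  · subst hva; simp [ha, hb]
  by_cases hvb : v = b
  · subst hvb; simp [ha, hb]
  have hpa : p v ≠ a := fun h => hva (by rw [← hp v, h, ha])
  have hpb : p v ≠ b := fun h => hvb (by rw [← hp v, h, hb])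
  simp [Equiv.swap_apply_of_ne_of_ne hpa hpb, hp v, Equiv.swap_apply_of_ne_of_ne hva hvb]

lemma swap_comp_apply_of_apply_ne [DecidableEq V] (hp : Involutive p) {a b v : V}
    (ha : p a = a) (hb : p b = b) (hv : p v ≠ v) : (Equiv.swap a b ∘ p) v = p v := by
  have hpa : p v ≠ a := fun h => hv (by rw [h]; rw [← hp v, h, ha])
  have hpb : p v ≠ b := fun h => hv (by rw [h]; rw [← hp v, h, hb])
  exact Equiv.swap_apply_of_ne_of_ne hpa hpb

lemma exists_involutive_card_fixed_le_one [Fintype V] [DecidableEq V] {q : V → V}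
    (hq : Involutive q) :
    ∃ p : V → V, Involutive p ∧ #{v | p v = v} ≤ 1 ∧ ∀ v, q v ≠ v → p v = q v := by
  induction hN : #{v | q v = v} using Nat.strong_induction_on generalizing q with
  | _ N ih =>
  by_cases hN1 : N ≤ 1
  · exact ⟨q, hq, hN ▸ hN1, fun _ _ => rfl⟩
  obtain ⟨a, ha, b, hb, hab⟩ := one_lt_card.1 (show 1 < #{v | q v = v} by omega)
  rw [mem_filter] at ha hb
  have hfix : ({v | (Equiv.swap a b ∘ q) v = v} : Finset V) ⊂ ({v | q v = v} : Finset V) := by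
    refine (ssubset_iff_of_subset fun v hv => ?_).2 ⟨a, by simpa using ha.2, ?_⟩
    · simp only [mem_filter, mem_univ, true_and] at hv ⊢
      by_contra hqv
      exact hqv (by rwa [swap_comp_apply_of_apply_ne hq ha.2 hb.2 hqv] at hv)
    · simp [ha.2, hab.symm]
  obtain ⟨p, hp, hp1, hpq⟩ :=
    ih _ (hN ▸ card_lt_card hfix) (involutive_swap_comp hq ha.2 hb.2) rfl
  refine ⟨p, hp, hp1, fun v hv => ?_⟩
  rw [← swap_comp_apply_of_apply_ne hq ha.2 hb.2 hv]
  exact hpq v (by rwa [swap_comp_apply_of_apply_ne hq ha.2 hb.2 hv])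

lemma exists_orientation (hp : Involutive p) :
    ∃ s : V → Bool, ∀ v, p v ≠ v → s (p v) ≠ s v := by
  classical
  refine ⟨fun v => decide (WellOrderingRel v (p v)), fun v hv => ?_⟩
  simp only [hp v, ne_eq, decide_eq_decide]
  rcases trichotomous_of WellOrderingRel v (p v) with h | h | h
  · exact fun h' => asymm h (h'.2 h)
  · exact absurd h.symm hv
  · exact fun h' => asymm h (h'.1 h)

lemma natAbs_card_true_sub_card_false_le_one [Fintype V] [DecidableEq V] (hp : Involutive p)
    (hfix : #{v | p v = v} ≤ 1) {c : V → Bool} (hc : ∀ v, p v ≠ v → c (p v) ≠ c v) :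
    ((#{v | c v = true} : ℤ) - #{v | c v = false}).natAbs ≤ 1 := by
  have hmoved : #{v | c v = true ∧ p v ≠ v} = #{v | c v = false ∧ p v ≠ v} := by
    refine card_bij' (fun v _ => p v) (fun v _ => p v) ?_ ?_ (fun v _ => hp v) (fun v _ => hp v)
    all_goals
      intro v hv
      simp only [mem_filter, mem_univ, true_and] at hv ⊢
      have := hc v hv.2
      refine ⟨by simpa [hv.1] using this, fun h => hv.2 (by rw [← h, hp])⟩
  have hsplit (t : Bool) :
      #{v | c v = t} = #{v | c v = t ∧ p v ≠ v} + #{v | c v = t ∧ p v = v} := by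
    rw [← card_union_of_disjoint (disjoint_filter.2 fun v _ h h' => h.2 h'.2)]
    congr 1; ext v; simp only [mem_filter, mem_univ, true_and, mem_union]; tauto
  have hfixed : #{v | c v = true ∧ p v = v} + #{v | c v = false ∧ p v = v} ≤ 1 := by
    rw [← card_union_of_disjoint (disjoint_filter.2 fun v _ h h' => by simp_all)]
    refine le_trans (card_le_card fun v hv => ?_) hfix
    simp only [mem_union, mem_filter, mem_univ, true_and] at hv ⊢
    tauto
  rw [hsplit, hsplit, hmoved]
  omega

end Pairing

section Hypergraph

variable {V : Type*} [DecidableEq V]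

def edgeNeighborhood (E : Finset (Finset V)) (e : Finset V) : Finset (Finset V) :=
  {f ∈ E | f ≠ e ∧ (e ∩ f).Nonempty}

lemma card_filter_mem_le_add_one {E : Finset (Finset V)} {D : ℕ}
    (hD : ∀ e ∈ E, #(edgeNeighborhood E e) ≤ D) (u : V) : #{f ∈ E | u ∈ f} ≤ D + 1 := by
  rcases eq_empty_or_nonempty {f ∈ E | u ∈ f} with h | ⟨e, he⟩
  · simp [h]
  rw [mem_filter] at he
  calc #{f ∈ E | u ∈ f} ≤ #(insert e (edgeNeighborhood E e)) := card_le_card fun f hf => by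
        rw [mem_filter] at hf
        rw [mem_insert, edgeNeighborhood, mem_filter]
        by_cases hfe : f = e
        · exact Or.inl hfe
        · exact Or.inr ⟨hf.1, hfe, u, mem_inter.2 ⟨he.2, hf.2⟩⟩
    _ ≤ D + 1 := (card_insert_le _ _).trans (Nat.add_le_add_right (hD e he.1) 1)

lemma card_filter_swap_comp_apply_ne_le {q : V → V} {E₀ : Finset (Finset V)} {e : Finset V}
    (he : e ∉ E₀) {u w : V} (hu : u ∈ e) (hw : w ∈ e)
    (hqT : ∀ T : Finset V, #{v ∈ T | q v ≠ v} ≤ 2 * #{f ∈ E₀ | (T ∩ f).Nonempty})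
    (T : Finset V) :
    #{v ∈ T | (Equiv.swap u w ∘ q) v ≠ v}
      ≤ 2 * #{f ∈ insert e E₀ | (T ∩ f).Nonempty} := by
  have hle : #{v ∈ T | (Equiv.swap u w ∘ q) v ≠ v}
      ≤ #{v ∈ T | q v ≠ v} + #(T ∩ {u, w}) := by
    refine (card_le_card fun v hv => ?_).trans (card_union_le _ _)
    simp only [mem_filter, mem_union, mem_inter, mem_insert, mem_singleton, comp_apply] at hv ⊢
    by_cases hqv : q v = v
    · rw [hqv] at hv
      refine Or.inr ⟨hv.1, by_contra fun h => hv.2 ?_⟩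
      exact Equiv.swap_apply_of_ne_of_ne (not_or.1 h).1 (not_or.1 h).2
    · exact Or.inl ⟨hv.1, hqv⟩
  have hT := hqT T
  by_cases hTe : (T ∩ e).Nonempty
  · have hpair : #(T ∩ {u, w}) ≤ 2 := (card_le_card inter_subset_right).trans card_le_two
    rw [filter_insert, if_pos hTe, card_insert_of_notMem fun h => he (mem_filter.1 h).1]
    omega
  · have hpair : T ∩ {u, w} = ∅ := by
      refine eq_empty_of_forall_notMem fun v hv => hTe ⟨v, ?_⟩
      simp only [mem_inter, mem_insert, mem_singleton] at hv ⊢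
      rcases hv with ⟨hvT, rfl | rfl⟩
      exacts [⟨hvT, hu⟩, ⟨hvT, hw⟩]
    rw [filter_insert, if_neg hTe]
    rw [hpair, card_empty] at hle
    omega

theorem exists_involutive_forall_exists_apply_mem (E : Finset (Finset V)) (D : ℕ)
    (hcard : ∀ e ∈ E, 2 * D + 2 ≤ #e) (hD : ∀ e ∈ E, #(edgeNeighborhood E e) ≤ D) :
    ∃ q : V → V, Involutive q ∧ ∀ e ∈ E, ∃ v ∈ e, q v ≠ v ∧ q v ∈ e := by
  -- The extra invariant bounds how many vertices of a new edge are already paired.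
  suffices h : ∀ E₀ ⊆ E, ∃ q : V → V, Involutive q ∧
      (∀ e ∈ E₀, ∃ v ∈ e, q v ≠ v ∧ q v ∈ e) ∧
      ∀ T : Finset V, #{v ∈ T | q v ≠ v} ≤ 2 * #{f ∈ E₀ | (T ∩ f).Nonempty} by
    obtain ⟨q, hq, hqE, -⟩ := h E Subset.rfl
    exact ⟨q, hq, hqE⟩
  intro E₀
  induction E₀ using Finset.induction_on with
  | empty => exact fun _ => ⟨id, fun _ => rfl, by simp, by simp⟩
  | insert e E₀ he ih =>
  intro hsub
  obtain ⟨q, hq, hqE, hqT⟩ := ih ((subset_insert e E₀).trans hsub)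
  have heE := hsub (mem_insert_self e E₀)
  have hmoved : #{v ∈ e | q v ≠ v} ≤ 2 * D := (hqT e).trans <| Nat.mul_le_mul_left 2 <|
    (card_le_card fun f hf => by
      rw [mem_filter] at hf
      exact mem_filter.2 ⟨hsub (mem_insert_of_mem hf.1), fun h => he (h ▸ hf.1), hf.2⟩).trans
    (hD e heE)
  have hfree : 1 < #{v ∈ e | q v = v} := by
    have : #{v ∈ e | q v = v} + #{v ∈ e | q v ≠ v} = #e := card_filter_add_card_filter_not _
    have := hcard e heE
    omega
  obtain ⟨u, hu, w, hw, huw⟩ := one_lt_card.1 hfree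
  rw [mem_filter] at hu hw
  refine ⟨Equiv.swap u w ∘ q, involutive_swap_comp hq hu.2 hw.2, ?_, ?_⟩
  · intro f hf
    rcases mem_insert.1 hf with rfl | hf
    · exact ⟨u, hu.1, by simp [hu.2, huw.symm], by simpa [hu.2] using hw.1⟩
    obtain ⟨v, hv, hqv, hqvf⟩ := hqE f hf
    refine ⟨v, hv, ?_⟩
    rw [swap_comp_apply_of_apply_ne hq hu.2 hw.2 hqv]
    exact ⟨hqv, hqvf⟩
  · exact card_filter_swap_comp_apply_ne_le he hu.1 hw.1 hqT

end Hypergraph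

section PairColoring

variable {V : Type*} (p : V → V) (s : V → Bool)

-- `s` picks in each pair the vertex whose coordinate of `b` colors the pair; its partner gets
-- the opposite color.
def pairRep (v : V) : V := if s v then v else p v

def pairColoring (b : V → Bool) (v : V) : Bool := if s v then b v else !b (p v)

variable {p s}

lemma pairColoring_eq_iff {b : V → Bool} {v : V} {t : Bool} :
    pairColoring p s b v = t ↔ b (pairRep p s v) = if s v then t else !t := by
  unfold pairColoring pairRep
  split_ifs <;> cases t <;> simp

lemma pairColoring_congr {b b' : V → Bool} {v : V} (h : b (pairRep p s v) = b' (pairRep p s v)) :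
    pairColoring p s b v = pairColoring p s b' v := by
  unfold pairColoring pairRep at *
  split_ifs at * <;> simp [h]

lemma pairColoring_apply_ne (hp : Involutive p) (hs : ∀ v, p v ≠ v → s (p v) ≠ s v)
    (b : V → Bool) {v : V} (hv : p v ≠ v) :
    pairColoring p s b (p v) ≠ pairColoring p s b v := by
  have := hs v hv
  unfold pairColoring
  cases h : s v <;> cases h' : s (p v) <;> simp_all [hp v]

lemma eq_or_eq_of_pairRep_eq (hp : Involutive p) {v w : V} (h : pairRep p s w = pairRep p s v) :
    w = v ∨ w = p v := by
  unfold pairRep at h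
  split_ifs at h
  · exact Or.inl h
  · exact Or.inr h
  · exact Or.inr (by rw [← h, hp w])
  · exact Or.inl (hp.injective h)

variable [DecidableEq V]

lemma card_filter_not_disjoint_image_pairRep_le (hp : Involutive p) {E : Finset (Finset V)}
    {n D : ℕ} (hunif : ∀ e ∈ E, #e = n) (hD : ∀ e ∈ E, #(edgeNeighborhood E e) ≤ D)
    {e : Finset V} (he : e ∈ E) :
    #{f ∈ E | f ≠ e ∧ ¬Disjoint (f.image (pairRep p s)) (e.image (pairRep p s))}
      ≤ D + n * (D + 1) := by
  have hsub : {f ∈ E | f ≠ e ∧ ¬Disjoint (f.image (pairRep p s)) (e.image (pairRep p s))}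
      ⊆ edgeNeighborhood E e ∪ e.biUnion fun v => {f ∈ E | p v ∈ f} := fun f hf => by
    obtain ⟨hfE, hfe, hdisj⟩ := mem_filter.1 hf
    obtain ⟨_, hwf, hve⟩ := not_disjoint_iff.1 hdisj
    obtain ⟨w, hw, rfl⟩ := mem_image.1 hwf
    obtain ⟨v, hv, hvw⟩ := mem_image.1 hve
    rcases eq_or_eq_of_pairRep_eq hp hvw.symm with rfl | rfl
    · exact mem_union_left _ (mem_filter.2 ⟨hfE, hfe, w, mem_inter.2 ⟨hv, hw⟩⟩)
    · exact mem_union_right _ (mem_biUnion.2 ⟨v, hv, mem_filter.2 ⟨hfE, hw⟩⟩)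
  calc _ ≤ #(edgeNeighborhood E e ∪ e.biUnion fun v => {f ∈ E | p v ∈ f}) :=
        card_le_card hsub
    _ ≤ #(edgeNeighborhood E e) + ∑ v ∈ e, #{f ∈ E | p v ∈ f} :=
        (card_union_le _ _).trans (Nat.add_le_add_left card_biUnion_le _)
    _ ≤ D + ∑ _v ∈ e, (D + 1) :=
        Nat.add_le_add (hD e he) (sum_le_sum fun v _ => card_filter_mem_le_add_one hD (p v))
    _ = D + n * (D + 1) := by rw [sum_const, smul_eq_mul, hunif e he]

lemma card_monochromatic_mul_le [Fintype V] (hp : Involutive p)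
    (hs : ∀ v, p v ≠ v → s (p v) ≠ s v) (e : Finset V) :
    #{b : V → Bool | ∃ t, ∀ v ∈ e, pairColoring p s b v = t} * 2 ^ #e
      ≤ 2 * 2 ^ Fintype.card V := by
  by_cases hpair : ∃ v ∈ e, p v ≠ v ∧ p v ∈ e
  · obtain ⟨v, hv, hpv, hpve⟩ := hpair
    have : ({b | ∃ t, ∀ v ∈ e, pairColoring p s b v = t} : Finset (V → Bool)) = ∅ := by
      refine eq_empty_of_forall_notMem fun b hb => ?_
      obtain ⟨t, ht⟩ := (mem_filter.1 hb).2
      exact pairColoring_apply_ne hp hs b hpv ((ht _ hpve).trans (ht v hv).symm)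
    rw [this, card_empty, zero_mul]
    positivity
  have hinj : Set.InjOn (pairRep p s) e := fun v hv w hw hvw => by
    rcases eq_or_eq_of_pairRep_eq hp hvw.symm with h | h
    · exact h.symm
    by_cases hpv : p v = v
    · rw [h, hpv]
    · exact absurd ⟨v, hv, hpv, h ▸ hw⟩ hpair
  let cyl (t : Bool) : Finset (V → Bool) :=
    {b | ∀ v ∈ e, b (pairRep p s v) = if s v then t else !t}
  have hcyl (t : Bool) : #(cyl t) * 2 ^ #e ≤ 2 ^ Fintype.card V := by
    have := card_filter_forall_apply_eq_mul_le (pairRep p s) (fun v => if s v then t else !t) e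
    rw [card_image_of_injOn hinj] at this
    convert this
  have hsub : ({b | ∃ t, ∀ v ∈ e, pairColoring p s b v = t} : Finset (V → Bool))
      ⊆ cyl true ∪ cyl false := fun b hb => by
    obtain ⟨t, ht⟩ := (mem_filter.1 hb).2
    simp only [mem_union, cyl, mem_filter, mem_univ, true_and]
    cases t
    exacts [Or.inr fun v hv => pairColoring_eq_iff.1 (ht v hv),
      Or.inl fun v hv => pairColoring_eq_iff.1 (ht v hv)]
  calc _ ≤ (#(cyl true) + #(cyl false)) * 2 ^ #e :=
        Nat.mul_le_mul_right _ ((card_le_card hsub).trans (card_union_le _ _))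
    _ ≤ 2 * 2 ^ Fintype.card V := by
        have := hcyl true
        have := hcyl false
        linarith

theorem exists_forall_pairColoring_ne [Fintype V] (hp : Involutive p)
    (hs : ∀ v, p v ≠ v → s (p v) ≠ s v)
    {E : Finset (Finset V)} {n D : ℕ} (hunif : ∀ e ∈ E, #e = n)
    (hD : ∀ e ∈ E, #(edgeNeighborhood E e) ≤ D) {x : ℝ} (hx0 : 0 ≤ x) (hx1 : x < 1)
    (hx : 2 ≤ x * (1 - x) ^ (D + n * (D + 1)) * 2 ^ n) :
    ∃ b : V → Bool, ∀ e ∈ E, ∃ v ∈ e, ∃ w ∈ e,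
      pairColoring p s b v ≠ pairColoring p s b w := by
  have hcard (e : Finset V) (he : e ∈ E) :
      (#{b : V → Bool | ∃ t, ∀ v ∈ e, pairColoring p s b v = t} : ℝ)
        ≤ x * (1 - x) ^ (D + n * (D + 1)) * 2 ^ Fintype.card V := by
    have h := card_monochromatic_mul_le hp hs e
    rw [hunif e he] at h
    have h' : (#{b : V → Bool | ∃ t, ∀ v ∈ e, pairColoring p s b v = t} : ℝ) * 2 ^ n
        ≤ 2 * 2 ^ Fintype.card V := by exact_mod_cast h
    have h2n : (0 : ℝ) < 2 ^ n := by positivity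
    nlinarith [pow_pos (by norm_num : (0 : ℝ) < 2) (Fintype.card V)]
  obtain ⟨b, hb⟩ := LocalLemma.exists_forall_notMem
    (fun e => {b : V → Bool | ∃ t, ∀ v ∈ e, pairColoring p s b v = t}) E
    (fun e => e.image (pairRep p s))
    (fun e _ b b' h => by
      simp only [mem_filter, mem_univ, true_and]
      refine propext (exists_congr fun t => forall₂_congr fun v hv => ?_)
      rw [pairColoring_congr (h _ (mem_image_of_mem _ hv))])
    hx0 hx1 hcard fun e he => card_filter_not_disjoint_image_pairRep_le hp hunif hD he
  refine ⟨b, fun e he => ?_⟩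
  have hmono := hb e he
  simp only [mem_filter, mem_univ, true_and, not_exists, not_forall] at hmono
  obtain ⟨v, hv, -⟩ := hmono true
  obtain ⟨w, hw, hwt⟩ := hmono (pairColoring p s b v)
  exact ⟨w, hw, v, hv, hwt⟩

end PairColoring

lemma two_mul_add_two_le_of_le {n D : ℕ} (hn : 2 ≤ n) (hn7 : n ≤ 7)
    (hD : (D : ℝ) ≤ 2 ^ ((n : ℤ) - 3) / n) : 2 * D + 2 ≤ n := by
  have h : (2 : ℝ) ^ ((n : ℤ) - 3) / n < (n - 1) / 2 := by
    interval_cases n <;> norm_num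
  have : (2 * D + 1 : ℝ) < n := by linarith
  exact_mod_cast this

lemma seventeen_mul_le_two_pow_mul (m : ℕ) (hm : 5 ≤ m) :
    17 * (m + 3) * (m + 4) ≤ 2 ^ m * (8 * m + 7) := by
  induction m, hm using Nat.le_induction with
  | base => norm_num
  | succ m hm ih =>
    have : 17 * (m + 1 + 3) * (m + 1 + 4) ≤ 2 * (17 * (m + 3) * (m + 4)) := by nlinarith
    rw [pow_succ]
    nlinarith

lemma exp_neg_one_le_one_sub_inv_pow (d : ℕ) : exp (-1) ≤ (1 - ((d : ℝ) + 1)⁻¹) ^ d := by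
  have h : (1 - ((d : ℝ) + 1)⁻¹) ^ d = ((1 + (d : ℝ)⁻¹) ^ d)⁻¹ := by
    rcases Nat.eq_zero_or_pos d with rfl | hd
    · simp
    rw [← inv_pow]
    congr 1
    field_simp
    ring
  rw [h, exp_neg]
  exact inv_anti₀ (by positivity) one_add_inv_pow_le_exp

lemma two_le_inv_mul_one_sub_inv_pow_mul_two_pow {n D d : ℕ} (hn : 8 ≤ n)
    (hD : (D : ℝ) ≤ 2 ^ ((n : ℤ) - 3) / n) (hd : d = D + n * (D + 1)) :
    2 ≤ ((d : ℝ) + 1)⁻¹ * (1 - ((d : ℝ) + 1)⁻¹) ^ d * 2 ^ n := by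
  obtain ⟨m, rfl⟩ : ∃ m, n = m + 3 := ⟨n - 3, by omega⟩
  have hzpow : (2 : ℝ) ^ (((m + 3 : ℕ) : ℤ) - 3) = 2 ^ m := by
    rw [show ((m + 3 : ℕ) : ℤ) - 3 = (m : ℤ) by push_cast; ring, zpow_natCast]
  rw [hzpow] at hD
  have h17 : (17 * (m + 3) * (m + 4) : ℝ) ≤ 2 ^ m * (8 * m + 7) := by
    exact_mod_cast seventeen_mul_le_two_pow_mul m (by omega)
  have hmD : ((m : ℝ) + 3) * D ≤ 2 ^ m := by
    rw [le_div_iff₀ (by positivity)] at hD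
    push_cast at hD
    linarith
  replace hd : (d : ℝ) + 1 = (m + 4) * (D + 1) := by rw [hd]; push_cast; ring
  have he := Real.exp_one_lt_d9
  have hkey : 2 * exp 1 * ((d : ℝ) + 1) ≤ 2 ^ (m + 3) := by
    rw [hd, pow_add]
    have hm3 : (0 : ℝ) < m + 3 := by positivity
    refine le_of_mul_le_mul_left ?_ hm3
    nlinarith [mul_le_mul_of_nonneg_left hmD (by positivity : (0 : ℝ) ≤ 2 * exp 1 * (m + 4)),
      mul_le_mul_of_nonneg_right he.le
        (by positivity : (0 : ℝ) ≤ 2 * (m + 4) * (2 ^ m + m + 3)),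
      exp_pos 1, pow_pos (by norm_num : (0 : ℝ) < 2) m]
  have hd0 : (0 : ℝ) < d + 1 := by positivity
  calc (2 : ℝ) ≤ ((d : ℝ) + 1)⁻¹ * exp (-1) * 2 ^ (m + 3) := by
        have : ((d : ℝ) + 1)⁻¹ * (exp 1)⁻¹ * 2 ^ (m + 3)
            = 2 ^ (m + 3) / (exp 1 * (d + 1)) := by
          field_simp
        rw [exp_neg, this, le_div_iff₀ (by positivity)]
        linarith
    _ ≤ ((d : ℝ) + 1)⁻¹ * (1 - ((d : ℝ) + 1)⁻¹) ^ d * 2 ^ (m + 3) := by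
        gcongr
        exact exp_neg_one_le_one_sub_inv_pow d

/-- Every `n`-uniform hypergraph with maximum neighborhood size at most
`2^(n-3)/n` has a proper halving 2-coloring: no hyperedge is monochromatic and
the two color classes differ in size by at most 1. -/
theorem proper_halving_of_small_neighborhood {V : Type} [Fintype V] [DecidableEq V]
    (n : ℕ) (hn : 2 ≤ n) (E : Finset (Finset V))
    (hunif : ∀ e ∈ E, e.card = n)
    (hnbhd : ∀ e ∈ E, (((E.filter fun f => f ≠ e ∧ (e ∩ f).Nonempty).card : ℝ))
      ≤ (2 : ℝ) ^ ((n : ℤ) - 3) / n) :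
    ∃ c : V → Bool,
      (∀ e ∈ E, ∃ v ∈ e, ∃ w ∈ e, c v ≠ c w) ∧
      ((((Finset.univ.filter fun v => c v = true).card : ℤ)
        - ((Finset.univ.filter fun v => c v = false).card : ℤ)).natAbs ≤ 1) := by
  set D := ⌊(2 : ℝ) ^ ((n : ℤ) - 3) / n⌋₊
  have hDle : (D : ℝ) ≤ 2 ^ ((n : ℤ) - 3) / n := Nat.floor_le (by positivity)
  have hD : ∀ e ∈ E, #(edgeNeighborhood E e) ≤ D := fun e he => Nat.le_floor (hnbhd e he)
  suffices h : ∃ p : V → V, Involutive p ∧ #{v | p v = v} ≤ 1 ∧ ∃ c : V → Bool,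
      (∀ v, p v ≠ v → c (p v) ≠ c v) ∧
      ∀ e ∈ E, ∃ v ∈ e, ∃ w ∈ e, c v ≠ c w by
    obtain ⟨p, hp, hfix, c, hc, hproper⟩ := h
    exact ⟨c, hproper, natAbs_card_true_sub_card_false_le_one hp hfix hc⟩
  rcases le_or_gt n 7 with hn7 | hn8
  · obtain ⟨q, hq, hqE⟩ := exists_involutive_forall_exists_apply_mem E D
      (fun e he => (hunif e he).symm ▸ two_mul_add_two_le_of_le hn hn7 hDle) hD
    obtain ⟨p, hp, hfix, hpq⟩ := exists_involutive_card_fixed_le_one hq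
    obtain ⟨s, hs⟩ := exists_orientation hp
    refine ⟨p, hp, hfix, s, hs, fun e he => ?_⟩
    obtain ⟨v, hv, hqv, hqve⟩ := hqE e he
    have hpv := hpq v hqv
    exact ⟨p v, hpv ▸ hqve, v, hv, hs v (hpv ▸ hqv)⟩
  · obtain ⟨p, hp, hfix, -⟩ :=
      exists_involutive_card_fixed_le_one (q := (id : V → V)) fun _ => rfl
    obtain ⟨s, hs⟩ := exists_orientation hp
    obtain ⟨b, hb⟩ := exists_forall_pairColoring_ne hp hs hunif hD (by positivity)
      (inv_lt_one_of_one_lt₀ (by norm_cast; nlinarith))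
      (two_le_inv_mul_one_sub_inv_pow_mul_two_pow hn8 hDle rfl)
    exact ⟨p, hp, hfix, pairColoring p s b, fun v hv => pairColoring_apply_ne hp hs b hv, hb⟩
end

section
/- For n ≥ 2 and real x with 0 < x = 2e/2^n ≤ 1, the inequality e·(1 − 2e/2^n)^(n·(2^n/(2en) − 1)) > 1 holds; equivalently, (1 − 2e/2^n)^(2^n/(2e) − n) > e^{-1}. -/
/-! Put `x = 2e/2^n`, so that both exponents equal `1/x - n`. From `log y ≥ 1 - 1/y` at
`y = 1 - x` one gets `(1/x - n) · (-log (1 - x)) ≤ (1 - n x)/(1 - x) < 1` whenever the exponent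
is positive, i.e. `(1 - x)^(1/x - n) > e⁻¹`; when the exponent is nonpositive this is immediate. -/

open Real

lemma neg_log_one_sub_le_div {x : ℝ} (hx : x < 1) : -log (1 - x) ≤ x / (1 - x) := by
  have hlog := one_sub_inv_le_log_of_pos (sub_pos.mpr hx)
  have hinv : 1 - (1 - x)⁻¹ = -(x / (1 - x)) := by
    field_simp [(sub_pos.mpr hx).ne']
    ring
  linarith

lemma exp_neg_one_lt_one_sub_rpow {x a : ℝ} (hx₀ : 0 < x) (hx₁ : x < 1) (ha : 1 < a) :
    exp (-1) < (1 - x) ^ (x⁻¹ - a) := by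
  have h1x : 0 < 1 - x := sub_pos.mpr hx₁
  rw [rpow_def_of_pos h1x, exp_lt_exp]
  have hlog : log (1 - x) < 0 := log_neg h1x (by linarith)
  rcases le_or_gt (x⁻¹ - a) 0 with ht | ht
  · nlinarith
  · have hbound : (x⁻¹ - a) * (x / (1 - x)) < 1 := by
      rw [show (x⁻¹ - a) * (x / (1 - x)) = (1 - a * x) / (1 - x) by field_simp,
        div_lt_one h1x]
      nlinarith
    nlinarith [mul_le_mul_of_nonneg_left (neg_log_one_sub_le_div hx₁) ht.le]

lemma two_mul_exp_one_div_two_pow_lt_one {n : ℕ} (hn : 2 ≤ n) (hx : 2 * exp 1 / 2 ^ n ≤ 1) :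
    2 * exp 1 / 2 ^ n < 1 := by
  have he := exp_one_gt_d9
  rcases hn.eq_or_lt with rfl | hn3
  · rw [div_le_one (by norm_num)] at hx
    norm_num at hx
    linarith
  · have h8 : (8 : ℝ) ≤ 2 ^ n := by
      calc (8 : ℝ) = 2 ^ 3 := by norm_num
        _ ≤ 2 ^ n := pow_le_pow_right₀ (by norm_num) hn3
    rw [div_lt_one (by positivity)]
    linarith [exp_one_lt_three]

/-- The key analytic inequality in the Local Lemma argument: for `n ≥ 2` with
`2e/2^n ≤ 1`, one has `e·(1 - 2e/2^n)^(n·(2^n/(2en) - 1)) > 1`, equivalently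
`(1 - 2e/2^n)^(2^n/(2e) - n) > e⁻¹` (real exponents). -/
theorem lll_inequality (n : ℕ) (hn : 2 ≤ n)
    (hx : 2 * Real.exp 1 / 2 ^ n ≤ 1) :
    1 < Real.exp 1 * (1 - 2 * Real.exp 1 / 2 ^ n)
        ^ ((n : ℝ) * ((2 : ℝ) ^ n / (2 * Real.exp 1 * n) - 1)) ∧
    (Real.exp 1)⁻¹ < (1 - 2 * Real.exp 1 / 2 ^ n)
        ^ ((2 : ℝ) ^ n / (2 * Real.exp 1) - (n : ℝ)) := by
  have hn₀ : (0 : ℝ) < n := by exact_mod_cast (by omega : 0 < n)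
  have hmain : (exp 1)⁻¹ < (1 - 2 * exp 1 / 2 ^ n) ^ ((2 : ℝ) ^ n / (2 * exp 1) - n) := by
    have h := exp_neg_one_lt_one_sub_rpow (a := n) (by positivity)
      (two_mul_exp_one_div_two_pow_lt_one hn hx) (by exact_mod_cast hn)
    rwa [inv_div, exp_neg] at h
  have hexponent : (n : ℝ) * ((2 : ℝ) ^ n / (2 * exp 1 * n) - 1) = 2 ^ n / (2 * exp 1) - n := by
    field_simp
  refine ⟨?_, hmain⟩
  rw [hexponent, ← inv_lt_iff_one_lt_mul₀' (exp_pos 1)]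
  exact hmain
end

section
/- Let k ≥ 0, let d be a power of 2, and let U be a unit of power k with |U| ≥ 2 that is a bottom unit at a leaf u of a tree hypergraph G with maximum degree at most 2d. Then u can be split (adding two children, assigning half of U's hyperedges extended by one child and half extended by the other) so that the resulting hypergraph has maximum degree at most 2d and each full branch through u contains a bottom unit U' of power k with |U'| = |U|/2; iterating, G can be extended at u so that each full branch through u contains a single bottom hyperedge of size log2(d) + k + 1. -/
/-- The finset of all boolean lists of length `k` (nodes on level `k` of the
complete infinite rooted binary tree). -/
def listsOfLen : ℕ → Finset (List Bool)
  | 0 => {[]}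
  | k+1 => (listsOfLen k).image (· ++ [true]) ∪ (listsOfLen k).image (· ++ [false])

/-- The vertex set of the full branch (root-to-`l` path) ending at the node `l`. -/
def prefixesF (l : List Bool) : Finset (List Bool) :=
  (Finset.range (l.length + 1)).image (fun i => l.take i)

/-- The vertex set of the level-descending path starting at node `p` and
ending at node `p ++ q`. -/
def pathFinset (p q : List Bool) : Finset (List Bool) :=
  (Finset.range (q.length + 1)).image (fun i => p ++ q.take i)

/-- `S` is (the node set of) a rooted binary tree: it contains the root, is
prefix-closed, and every node has either zero or two children. -/
def IsBinTree (S : Finset (List Bool)) : Prop :=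
  [] ∈ S ∧ (∀ l ∈ S, ∀ p : List Bool, p <+: l → p ∈ S) ∧
    ∀ l ∈ S, ((l ++ [true]) ∈ S ↔ (l ++ [false]) ∈ S)

/-- `l` is a leaf of the tree `S`. -/
def IsLeaf (S : Finset (List Bool)) (l : List Bool) : Prop :=
  l ∈ S ∧ (l ++ [true]) ∉ S ∧ (l ++ [false]) ∉ S

/-- The edge `e` is a level-descending path inside the tree `S`. -/
def InTree (S : Finset (List Bool)) (e : Finset (List Bool)) : Prop :=
  ∃ p q : List Bool, (p ++ q) ∈ S ∧ e = pathFinset p q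

/-- Degree of vertex `v` in a hypergraph with hyperedge multiset `E`
(counted with multiplicity). -/
def mDegree (E : Multiset (Finset (List Bool))) (v : List Bool) : ℕ :=
  Multiset.countP (fun e => v ∈ e) E

/-- The number (with multiplicity) of bottom hyperedges of size `L` of the full
branch ending at the leaf `l`: hyperedges contained in the branch and ending at `l`. -/
def bottomCount (E : Multiset (Finset (List Bool))) (l : List Bool) (L : ℕ) : ℕ :=
  Multiset.countP (fun e => l ∈ e ∧ e ⊆ prefixesF l ∧ e.card = L) E

/-- With `d = 2^m`, the full branch ending at leaf `l` contains bottom units of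
power `k` whose multiset of lengths is `ls`: a unit of power `k` and length `L`
consists of `2^(m+1+k-L)` hyperedges of size `L` ending at `l`. -/
def HasBottomUnits (m k : ℕ) (E : Multiset (Finset (List Bool))) (l : List Bool)
    (ls : Multiset ℕ) : Prop :=
  (∀ L ∈ ls, k ≤ L ∧ L ≤ m + 1 + k) ∧
  ∀ L : ℕ, ls.count L * 2 ^ (m + 1 + k - L) ≤ bottomCount E l L

lemma mem_prefixesF {v l : List Bool} : v ∈ prefixesF l ↔ v <+: l := by
  constructor
  · rintro h
    simp only [prefixesF, Finset.mem_image, Finset.mem_range] at h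
    obtain ⟨i, -, rfl⟩ := h
    exact List.take_prefix _ _
  · intro h
    simp only [prefixesF, Finset.mem_image, Finset.mem_range]
    exact ⟨v.length, Nat.lt_succ_of_le h.length_le, (List.prefix_iff_eq_take.mp h).symm⟩

lemma mem_pathFinset {v p q : List Bool} :
    v ∈ pathFinset p q ↔ p <+: v ∧ v <+: p ++ q := by
  constructor
  · rintro h
    simp only [pathFinset, Finset.mem_image, Finset.mem_range] at h
    obtain ⟨i, -, rfl⟩ := h
    exact ⟨List.prefix_append _ _, (List.prefix_append_right_inj p).mpr (List.take_prefix _ _)⟩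
  · rintro ⟨⟨t, rfl⟩, h2⟩
    have ht : t <+: q := (List.prefix_append_right_inj p).mp h2
    simp only [pathFinset, Finset.mem_image, Finset.mem_range]
    exact ⟨t.length, Nat.lt_succ_of_le ht.length_le,
      by rw [← List.prefix_iff_eq_take.mp ht]⟩

lemma prefix_antisymm {a b : List Bool} (h1 : a <+: b) (h2 : b <+: a) : a = b :=
  h1.eq_of_length (le_antisymm h1.length_le h2.length_le)

lemma prefix_snoc_iff {v l : List Bool} {b : Bool} :
    v <+: l ++ [b] ↔ v = l ++ [b] ∨ v <+: l := by
  constructor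
  · intro h
    rcases Nat.lt_or_ge v.length (l ++ [b]).length with hl | hl
    · exact Or.inr (List.prefix_of_prefix_length_le h (List.prefix_append _ _)
        (by simp at hl ⊢; omega))
    · exact Or.inl (h.eq_of_length (le_antisymm h.length_le hl))
  · rintro (rfl | h); · exact List.prefix_rfl
    · exact h.trans (List.prefix_append _ _)

lemma pathFinset_snoc (p q : List Bool) (b : Bool) :
    pathFinset p (q ++ [b]) = insert (p ++ q ++ [b]) (pathFinset p q) := by
  ext v
  simp only [Finset.mem_insert, mem_pathFinset, ← List.append_assoc]
  constructor
  · rintro ⟨h1, h2⟩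
    rcases prefix_snoc_iff.mp h2 with rfl | h
    · exact Or.inl rfl
    · exact Or.inr ⟨h1, h⟩
  · rintro (rfl | ⟨h1, h2⟩)
    · exact ⟨(List.prefix_append p q).trans (List.prefix_append _ _), List.prefix_rfl⟩
    · exact ⟨h1, h2.trans (List.prefix_append _ _)⟩

lemma card_pathFinset (p q : List Bool) : (pathFinset p q).card = q.length + 1 := by
  rw [pathFinset, Finset.card_image_of_injOn, Finset.card_range]
  intro i hi j hj hij
  simp only [Finset.coe_range, Set.mem_Iio, Finset.mem_coe, Finset.mem_range] at *
  have : (p ++ q.take i).length = (p ++ q.take j).length := by rw [hij]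
  simp only [List.length_append, List.length_take] at this
  omega

lemma exists_snoc_prefix {u l : List Bool} (h : u <+: l) (hne : l ≠ u) :
    ∃ b : Bool, u ++ [b] <+: l := by
  obtain ⟨t, rfl⟩ := h
  cases t with
  | nil => simp at hne
  | cons b t' => exact ⟨b, by simp [List.cons_prefix_cons]⟩

lemma multiset_exists_le_card {α : Type*} (B : Multiset α) (n : ℕ) (h : n ≤ Multiset.card B) :
    ∃ C ≤ B, Multiset.card C = n := by
  refine ⟨(B.toList.take n : List α), ?_, ?_⟩
  · have : (B.toList.take n : Multiset α) ≤ (B.toList : Multiset α) :=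
      (List.take_sublist n B.toList).subperm
    rwa [Multiset.coe_toList] at this
  · simp only [Multiset.coe_card, List.length_take]
    rw [Multiset.length_toList]
    omega

lemma countP_eq_of_count_eq {α : Type*} [DecidableEq α] {M N : Multiset α}
    (p : α → Prop) [DecidablePred p]
    (h : ∀ e, Multiset.count e M ≠ Multiset.count e N → ¬ p e) :
    Multiset.countP p M = Multiset.countP p N := by
  rw [Multiset.countP_eq_card_filter, Multiset.countP_eq_card_filter]
  congr 1
  ext e
  simp only [Multiset.count_filter]
  by_cases hp : p e
  · simp only [hp, if_true]
    by_contra hne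
    exact h e hne hp
  · simp [hp]

lemma InTree.mono {S S' : Finset (List Bool)} (h : S ⊆ S') {e : Finset (List Bool)} :
    InTree S e → InTree S' e := fun ⟨p, q, hpq, he⟩ => ⟨p, q, h hpq, he⟩

lemma vertex_mem {S : Finset (List Bool)} (hS : IsBinTree S) {e : Finset (List Bool)}
    (he : InTree S e) {v : List Bool} (hv : v ∈ e) : v ∈ S := by
  obtain ⟨p, q, hpq, rfl⟩ := he
  exact hS.2.1 _ hpq _ (mem_pathFinset.mp hv).2

/-- Structure of a bottom hyperedge at `u`. -/
lemma unit_edge_structure {S : Finset (List Bool)} {e : Finset (List Bool)} {u : List Bool}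
    {L : ℕ} (he : InTree S e) (h1 : u ∈ e) (h2 : e ⊆ prefixesF u) (h3 : e.card = L) :
    ∃ p q : List Bool, e = pathFinset p q ∧ p <+: u ∧ p ++ q = u ∧ p.length + L = u.length + 1 := by
  obtain ⟨p, q, hpq, rfl⟩ := he
  have hu := mem_pathFinset.mp h1
  have hmem : p ++ q ∈ pathFinset p q := mem_pathFinset.mpr ⟨List.prefix_append _ _, List.prefix_rfl⟩
  have heq : p ++ q = u := prefix_antisymm (mem_prefixesF.mp (h2 hmem)) hu.2
  have hc := card_pathFinset p q
  rw [h3] at hc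
  have hl : p.length + q.length = u.length := by
    rw [← heq]; simp
  exact ⟨p, q, rfl, hu.1, heq, by omega⟩

lemma bottomCount_add (M N : Multiset (Finset (List Bool))) (l : List Bool) (L : ℕ) :
    bottomCount (M + N) l L = bottomCount M l L + bottomCount N l L :=
  Multiset.countP_add _ _ _

lemma part1 (m k L : ℕ) (hLk : k ≤ L) (hLm : L ≤ m + k)
    (S : Finset (List Bool)) (E : Multiset (Finset (List Bool)))
    (hS : IsBinTree S) (hE : ∀ e ∈ E, InTree S e)
    (hdeg : ∀ v : List Bool, mDegree E v ≤ 2 * 2 ^ m)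
    (u : List Bool) (hu : IsLeaf S u)
    (hunit : HasBottomUnits m k E u {L}) :
    ∃ E' : Multiset (Finset (List Bool)),
      (∀ e ∈ E', InTree (S ∪ {u ++ [true], u ++ [false]}) e) ∧
      (∀ e : Finset (List Bool), Multiset.count e E' ≠ Multiset.count e E →
        ∃ p q : List Bool, e = pathFinset p q ∧ p <+: u ∧ u <+: p ++ q ∧
          p.length + L = u.length + 1) ∧
      (∀ v : List Bool, mDegree E' v ≤ 2 * 2 ^ m) ∧
      (∀ b : Bool, HasBottomUnits m k E' (u ++ [b]) {L + 1}) := by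
  classical
  set N := 2 ^ (m + k - L) with hN
  -- the multiset of bottom unit edges
  set B := E.filter (fun e => u ∈ e ∧ e ⊆ prefixesF u ∧ e.card = L) with hBdef
  have hcard : N + N ≤ Multiset.card B := by
    have h2 := hunit.2 L
    simp only [Multiset.count_singleton_self, one_mul] at h2
    have : m + 1 + k - L = (m + k - L) + 1 := by omega
    rw [this, pow_succ] at h2
    have hbc : bottomCount E u L = Multiset.card B := Multiset.countP_eq_card_filter _ _
    rw [hbc] at h2
    omega
  have hBmem : ∀ e ∈ B, (u ∈ e ∧ e ⊆ prefixesF u ∧ e.card = L) ∧ e ∈ E := by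
    intro e he
    rw [hBdef, Multiset.mem_filter] at he
    exact ⟨he.2, he.1⟩
  obtain ⟨B₁, hB₁le, hB₁card⟩ := multiset_exists_le_card B N (by omega)
  obtain ⟨C, hC⟩ := exists_add_of_le hB₁le
  have hCcard : N ≤ Multiset.card C := by
    have := congrArg Multiset.card hC
    simp only [Multiset.map_add, Multiset.card_add] at this
    omega
  obtain ⟨B₂, hB₂le, hB₂card⟩ := multiset_exists_le_card C N hCcard
  obtain ⟨C₂, hC₂⟩ := exists_add_of_le hB₂le
  set R := E.filter (fun e => ¬(u ∈ e ∧ e ⊆ prefixesF u ∧ e.card = L)) with hRdef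
  have hER : E = B₁ + B₂ + C₂ + R := by
    have h := Multiset.filter_add_not (fun e => u ∈ e ∧ e ⊆ prefixesF u ∧ e.card = L) E
    rw [← hBdef, ← hRdef] at h
    rw [← h, hC, hC₂, add_assoc B₁ B₂ C₂]
  have hB₁B : ∀ e ∈ B₁, e ∈ B := fun e he => Multiset.mem_of_le hB₁le he
  have hB₂B : ∀ e ∈ B₂, e ∈ B := fun e he => by
    rw [hC]; exact Multiset.mem_add.mpr (Or.inr (Multiset.mem_of_le hB₂le he))
  have hC₂B : ∀ e ∈ C₂, e ∈ B := fun e he => by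
    rw [hC, hC₂]
    exact Multiset.mem_add.mpr (Or.inr (Multiset.mem_add.mpr (Or.inr he)))
  -- structure of unit edges
  have hstruct : ∀ e ∈ B, ∃ p q : List Bool, e = pathFinset p q ∧ p <+: u ∧ p ++ q = u ∧
      p.length + L = u.length + 1 := by
    intro e he
    obtain ⟨⟨h1, h2, h3⟩, heE⟩ := hBmem e he
    exact unit_edge_structure (hE e heE) h1 h2 h3
  -- the extension maps
  set f : Bool → Finset (List Bool) → Finset (List Bool) :=
    fun b e => insert (u ++ [b]) e with hf
  have hext : ∀ e ∈ B, ∀ b : Bool, ∃ p q : List Bool,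
      f b e = pathFinset p q ∧ p <+: u ∧ p ++ q = u ++ [b] ∧
      p.length + L = u.length + 1 := by
    intro e he b
    obtain ⟨p, q, rfl, hpu, hpq, hlen⟩ := hstruct e he
    refine ⟨p, q ++ [b], ?_, hpu, by rw [← List.append_assoc, hpq], hlen⟩
    rw [pathFinset_snoc, hpq]
  -- u ++ [b] is not a vertex of any edge of E
  have hnotmem : ∀ e ∈ E, ∀ b : Bool, u ++ [b] ∉ e := by
    intro e heE b hmem
    have := vertex_mem hS (hE e heE) hmem
    cases b
    · exact hu.2.2 this
    · exact hu.2.1 this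
  set E' := B₁.map (f true) + B₂.map (f false) + C₂ + R with hE'
  refine ⟨E', ?_, ?_, ?_, ?_⟩
  · -- InTree
    intro e he
    simp only [hE', Multiset.mem_add, Multiset.mem_map] at he
    have hsub : S ⊆ S ∪ {u ++ [true], u ++ [false]} := Finset.subset_union_left
    have hbmem : ∀ b : Bool, u ++ [b] ∈ S ∪ {u ++ [true], u ++ [false]} := by
      intro b
      apply Finset.mem_union_right
      cases b <;> simp
    rcases he with ((⟨e₀, he₀, rfl⟩ | ⟨e₀, he₀, rfl⟩) | hc) | hr
    · obtain ⟨p, q, hfe, -, hpq, -⟩ := hext e₀ (hB₁B e₀ he₀) true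
      exact ⟨p, q, by rw [hpq]; exact hbmem true, hfe⟩
    · obtain ⟨p, q, hfe, -, hpq, -⟩ := hext e₀ (hB₂B e₀ he₀) false
      exact ⟨p, q, by rw [hpq]; exact hbmem false, hfe⟩
    · exact (hE e (hBmem e (hC₂B e hc)).2).mono hsub
    · exact (hE e (Multiset.mem_of_le (Multiset.filter_le _ E) hr)).mono hsub
  · -- count clause
    intro e hcnt
    rw [hER] at hcnt
    simp only [hE', Multiset.count_add] at hcnt
    have hkey : e ∈ B₁.map (f true) ∨ e ∈ B₂.map (f false) ∨ e ∈ B₁ ∨ e ∈ B₂ := by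
      by_contra hnone
      push_neg at hnone
      obtain ⟨h1, h2, h3, h4⟩ := hnone
      rw [Multiset.count_eq_zero_of_notMem h1, Multiset.count_eq_zero_of_notMem h2,
        Multiset.count_eq_zero_of_notMem h3, Multiset.count_eq_zero_of_notMem h4] at hcnt
      omega
    have hfromB : ∀ e₀ ∈ B, ∃ p q : List Bool, e₀ = pathFinset p q ∧ p <+: u ∧
        u <+: p ++ q ∧ p.length + L = u.length + 1 := by
      intro e₀ he₀
      obtain ⟨p, q, he, hpu, hpq, hlen⟩ := hstruct e₀ he₀
      exact ⟨p, q, he, hpu, by rw [hpq], hlen⟩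
    have hfromExt : ∀ (b : Bool), ∀ e₀ ∈ B, e = f b e₀ → ∃ p q : List Bool,
        e = pathFinset p q ∧ p <+: u ∧ u <+: p ++ q ∧ p.length + L = u.length + 1 := by
      intro b e₀ he₀ heq
      obtain ⟨p, q, he, hpu, hpq, hlen⟩ := hext e₀ he₀ b
      refine ⟨p, q, by rw [heq, he], hpu, ?_, hlen⟩
      rw [hpq]
      exact List.prefix_append _ _
    rcases hkey with h | h | h | h
    · obtain ⟨e₀, he₀, heq⟩ := Multiset.mem_map.mp h
      exact hfromExt true e₀ (hB₁B e₀ he₀) heq.symm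
    · obtain ⟨e₀, he₀, heq⟩ := Multiset.mem_map.mp h
      exact hfromExt false e₀ (hB₂B e₀ he₀) heq.symm
    · exact hfromB e (hB₁B e h)
    · exact hfromB e (hB₂B e h)
  · -- degrees
    intro v
    have hNle : N ≤ 2 * 2 ^ m := by
      have : N ≤ 2 ^ m := Nat.pow_le_pow_right (by norm_num) (by omega)
      omega
    by_cases hv : v = u ++ [true] ∨ v = u ++ [false]
    · -- v is one of the new vertices
      have hz : ∀ (M : Multiset (Finset (List Bool))), (∀ e ∈ M, e ∈ E) →
          Multiset.countP (fun e => v ∈ e) M = 0 := by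
        intro M hM
        apply Multiset.countP_eq_zero.mpr
        intro e he hve
        rcases hv with rfl | rfl
        · exact hnotmem e (hM e he) true hve
        · exact hnotmem e (hM e he) false hve
      have hmapcount : ∀ (b : Bool) (M : Multiset (Finset (List Bool))), (∀ e ∈ M, e ∈ E) →
          Multiset.countP (fun e => v ∈ e) (M.map (f b)) =
            if v = u ++ [b] then Multiset.card M else 0 := by
        intro b M hM
        rw [Multiset.countP_map]
        split_ifs with hvb
        · have heq : Multiset.filter (fun e => v ∈ f b e) M = M :=
            Multiset.filter_eq_self.mpr (fun e he => by simp [hf, hvb])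
          rw [heq]
        · have heq : Multiset.filter (fun e => v ∈ f b e) M = 0 := by
            apply Multiset.filter_eq_nil.mpr
            intro e₀ he₀ hve
            simp only [hf, Finset.mem_insert] at hve
            rcases hve with h | h
            · exact hvb h
            · rcases hv with rfl | rfl
              · exact hnotmem e₀ (hM e₀ he₀) true h
              · exact hnotmem e₀ (hM e₀ he₀) false h
          rw [heq, Multiset.card_zero]
      have hc2 : ∀ e ∈ C₂, e ∈ E := fun e he => (hBmem e (hC₂B e he)).2
      have hr : ∀ e ∈ R, e ∈ E := fun e he => Multiset.mem_of_le (Multiset.filter_le _ E) he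
      have hb1 : ∀ e ∈ B₁, e ∈ E := fun e he => (hBmem e (hB₁B e he)).2
      have hb2 : ∀ e ∈ B₂, e ∈ E := fun e he => (hBmem e (hB₂B e he)).2
      rw [mDegree, hE']
      simp only [Multiset.countP_add]
      rw [hmapcount true B₁ hb1, hmapcount false B₂ hb2, hz C₂ hc2, hz R hr, hB₁card, hB₂card]
      rcases hv with rfl | rfl
      · rw [if_pos rfl, if_neg (by simp)]
        omega
      · rw [if_neg (by simp), if_pos rfl]
        omega
    · -- old vertex: degree unchanged
      push_neg at hv
      have hmap : ∀ (b : Bool) (M : Multiset (Finset (List Bool))),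
          Multiset.countP (fun e => v ∈ e) (M.map (f b)) =
            Multiset.countP (fun e => v ∈ e) M := by
        intro b M
        rw [Multiset.countP_map]
        rw [Multiset.countP_eq_card_filter]
        congr 1
        apply Multiset.filter_congr
        intro e he
        simp only [hf, Finset.mem_insert]
        constructor
        · rintro (h | h)
          · exact absurd h (by cases b; exacts [hv.2, hv.1])
          · exact h
        · exact Or.inr
      have : mDegree E' v = mDegree E v := by
        rw [hER, mDegree, mDegree, hE']
        simp only [Multiset.countP_add, hmap]
      rw [this]
      exact hdeg v
  · -- units
    intro b
    constructor
    · intro L' hL'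
      rw [Multiset.mem_singleton] at hL'
      omega
    · intro L'
      by_cases hL' : L' = L + 1
      · subst hL'
        simp only [Multiset.count_singleton_self, one_mul]
        have hexp : m + 1 + k - (L + 1) = m + k - L := by omega
        rw [hexp]
        -- each extended edge of B_b satisfies the bottom predicate at u ++ [b]
        have hpred : ∀ e₀ ∈ B, (u ++ [b]) ∈ f b e₀ ∧ f b e₀ ⊆ prefixesF (u ++ [b]) ∧
            (f b e₀).card = L + 1 := by
          intro e₀ he₀
          obtain ⟨⟨h1, h2, h3⟩, -⟩ := hBmem e₀ he₀
          have hnm : u ++ [b] ∉ e₀ := by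
            intro hmem
            have := mem_prefixesF.mp (h2 hmem)
            have := this.length_le
            simp at this
          refine ⟨Finset.mem_insert_self _ _, ?_, ?_⟩
          · intro x hx
            rcases Finset.mem_insert.mp hx with rfl | hx
            · exact mem_prefixesF.mpr List.prefix_rfl
            · exact mem_prefixesF.mpr ((mem_prefixesF.mp (h2 hx)).trans (List.prefix_append _ _))
          · rw [hf]
            simp only
            rw [Finset.card_insert_of_notMem hnm, h3]
        have key : ∀ (Bb : Multiset (Finset (List Bool))), (∀ e ∈ Bb, e ∈ B) →
            Multiset.card Bb ≤ bottomCount (Bb.map (f b)) (u ++ [b]) (L + 1) := by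
          intro Bb hBb
          rw [bottomCount]
          have heq : Multiset.countP
              (fun e => u ++ [b] ∈ e ∧ e ⊆ prefixesF (u ++ [b]) ∧ e.card = L + 1)
              (Bb.map (f b)) = Multiset.card (Bb.map (f b)) := by
            apply Multiset.countP_eq_card.mpr
            rintro e he
            obtain ⟨e₀, he₀, rfl⟩ := Multiset.mem_map.mp he
            exact hpred e₀ (hBb e₀ he₀)
          rw [heq, Multiset.card_map]
        rw [hE', bottomCount_add, bottomCount_add, bottomCount_add]
        cases b
        · have h2 := key B₂ hB₂B
          rw [hB₂card] at h2
          omega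
        · have h1 := key B₁ hB₁B
          rw [hB₁card] at h1
          omega
      · simp [Multiset.count_singleton, hL']

lemma snoc_inj {l u : List Bool} {b c : Bool} (h : l ++ [b] = u ++ [c]) : l = u ∧ b = c := by
  have := List.append_inj h (by have := congrArg List.length h; simp at this; omega)
  simpa using this

lemma prefix_eq_of_length {l a b : List Bool} (h1 : a <+: l) (h2 : b <+: l)
    (h3 : a.length = b.length) : a = b :=
  (List.prefix_of_prefix_length_le h1 h2 h3.le).eq_of_length h3

lemma not_snoc_prefix_snoc {u l : List Bool} {b c : Bool} (hbc : b ≠ c) :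
    ¬ (u ++ [b] <+: u ++ [c] ++ l) := by
  intro h
  rw [List.append_assoc] at h
  have := (List.prefix_append_right_inj u).mp h
  rw [List.singleton_append, List.cons_prefix_cons] at this
  exact hbc this.1

lemma prefix_of_prefix_snoc {p l : List Bool} {b : Bool} (h : p <+: l ++ [b])
    (hlen : p.length ≤ l.length) : p <+: l := by
  rcases prefix_snoc_iff.mp h with rfl | h
  · simp at hlen
  · exact h

lemma binTree_extend {S : Finset (List Bool)} {u : List Bool} (hS : IsBinTree S)
    (hu : IsLeaf S u) : IsBinTree (S ∪ {u ++ [true], u ++ [false]}) := by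
  have hpair : ∀ x, x ∈ ({u ++ [true], u ++ [false]} : Finset (List Bool)) ↔
      x = u ++ [true] ∨ x = u ++ [false] := by intro x; simp
  refine ⟨Finset.mem_union_left _ hS.1, ?_, ?_⟩
  · intro l hl p hp
    rcases Finset.mem_union.mp hl with hl | hl
    · exact Finset.mem_union_left _ (hS.2.1 l hl p hp)
    · rcases (hpair l).mp hl with rfl | rfl <;>
      · rcases prefix_snoc_iff.mp hp with rfl | hp'
        · exact Finset.mem_union_right _ hl
        · exact Finset.mem_union_left _ (hS.2.1 u hu.1 p hp')
  · intro l hl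
    have hmem : ∀ b : Bool, (l ++ [b] ∈ S ∪ {u ++ [true], u ++ [false]}) ↔
        (l ++ [b] ∈ S ∨ l = u) := by
      intro b
      rw [Finset.mem_union, hpair]
      constructor
      · rintro (h | h | h)
        · exact Or.inl h
        · exact Or.inr (snoc_inj h).1
        · exact Or.inr (snoc_inj h).1
      · rintro (h | rfl)
        · exact Or.inl h
        · cases b
          · exact Or.inr (Or.inr rfl)
          · exact Or.inr (Or.inl rfl)
    rw [hmem, hmem]
    rcases Finset.mem_union.mp hl with hl | hl
    · rw [hS.2.2 l hl]
    · have hluF : ∀ b' : Bool, l = u ++ [b'] → ∀ c : Bool, ¬(l ++ [c] ∈ S ∨ l = u) := by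
        rintro b' rfl c (h | h)
        · have hb : u ++ [b'] ∈ S := hS.2.1 _ h _ (List.prefix_append _ _)
          cases b'
          exacts [hu.2.2 hb, hu.2.1 hb]
        · have := congrArg List.length h
          simp at this
      rcases (hpair l).mp hl with h | h
      · exact iff_of_false (hluF true h true) (hluF true h false)
      · exact iff_of_false (hluF false h true) (hluF false h false)

lemma leaf_extend {S : Finset (List Bool)} {u : List Bool} (hS : IsBinTree S)
    (hu : IsLeaf S u) (b : Bool) : IsLeaf (S ∪ {u ++ [true], u ++ [false]}) (u ++ [b]) := by
  have hchild : ∀ c : Bool, u ++ [b] ++ [c] ∉ S ∪ {u ++ [true], u ++ [false]} := by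
    intro c hc
    rcases Finset.mem_union.mp hc with h | h
    · have hb : u ++ [b] ∈ S := hS.2.1 _ h _ (List.prefix_append _ _)
      cases b
      exacts [hu.2.2 hb, hu.2.1 hb]
    · simp only [Finset.mem_insert, Finset.mem_singleton] at h
      rcases h with h | h <;>
      · have := (snoc_inj h).1
        have := congrArg List.length this
        simp at this
  refine ⟨Finset.mem_union_right _ ?_, hchild true, hchild false⟩
  cases b <;> simp

lemma not_other_prefix {u l : List Bool} {b c : Bool} (hbc : b ≠ c) (h : u ++ [b] <+: l) :
    ¬ (u ++ [c] <+: l) := fun h' =>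
  hbc (snoc_inj (prefix_eq_of_length h h' (by simp))).2

lemma hasBottomUnits_stable {m k : ℕ} {E E' : Multiset (Finset (List Bool))} {l w : List Bool}
    {ls : Multiset ℕ}
    (hch : ∀ e, Multiset.count e E' ≠ Multiset.count e E → w ∈ e)
    (hw : ¬ (w <+: l)) (h : HasBottomUnits m k E l ls) : HasBottomUnits m k E' l ls := by
  refine ⟨h.1, fun L' => ?_⟩
  have heq : bottomCount E' l L' = bottomCount E l L' := by
    apply countP_eq_of_count_eq
    intro e hne hpred
    exact hw (mem_prefixesF.mp (hpred.2.1 (hch e hne)))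
  rw [bottomCount] at heq
  rw [bottomCount, heq]
  exact h.2 L'

lemma part2aux (m k : ℕ) : ∀ (n L : ℕ), m + 1 + k - L ≤ n → k ≤ L → L ≤ m + 1 + k →
    ∀ (S : Finset (List Bool)) (E : Multiset (Finset (List Bool))),
    IsBinTree S → (∀ e ∈ E, InTree S e) →
    (∀ v : List Bool, mDegree E v ≤ 2 * 2 ^ m) →
    ∀ u : List Bool, IsLeaf S u → HasBottomUnits m k E u {L} →
    ∃ (S' : Finset (List Bool)) (E' : Multiset (Finset (List Bool))),
      S ⊆ S' ∧ IsBinTree S' ∧ (∀ x ∈ S', x ∈ S ∨ u <+: x) ∧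
      (∀ e ∈ E', InTree S' e) ∧
      (∀ e : Finset (List Bool), Multiset.count e E' ≠ Multiset.count e E →
        ∃ p q : List Bool, e = pathFinset p q ∧ p <+: u ∧ u <+: p ++ q ∧
          p.length + L = u.length + 1) ∧
      (∀ v : List Bool, mDegree E' v ≤ 2 * 2 ^ m) ∧
      (∀ l : List Bool, IsLeaf S' l → u <+: l → HasBottomUnits m k E' l {m + 1 + k}) := by
  intro n
  induction n with
  | zero =>
    intro L h0 hk hle S E hS hE hdeg u hu hunit
    have hL : L = m + 1 + k := by omega
    subst hL
    refine ⟨S, E, Finset.Subset.refl S, hS, fun x hx => Or.inl hx, hE,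
      fun e h => absurd rfl h, hdeg, ?_⟩
    intro l hl hpre
    have hlu : l = u := by
      by_contra hne
      obtain ⟨b, hb⟩ := exists_snoc_prefix hpre hne
      have hbS : u ++ [b] ∈ S := hS.2.1 l hl.1 _ hb
      cases b
      exacts [hu.2.2 hbS, hu.2.1 hbS]
    subst hlu
    exact hunit
  | succ n ih =>
    intro L h0 hk hle S E hS hE hdeg u hu hunit
    by_cases hc : m + 1 + k - L ≤ n
    · exact ih L hc hk hle S E hS hE hdeg u hu hunit
    push_neg at hc
    have hLm : L ≤ m + k := by omega
    obtain ⟨E'', hI, hcnt'', hdeg'', hunits''⟩ :=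
      part1 m k L hk hLm S E hS hE hdeg u hu hunit
    have hS'' : IsBinTree (S ∪ {u ++ [true], u ++ [false]}) := binTree_extend hS hu
    have hLpos : 1 ≤ L := by
      by_contra h
      have hL0 : L = 0 := by omega
      subst hL0
      have hz : bottomCount E u 0 = 0 := by
        apply Multiset.countP_eq_zero.mpr
        rintro e he ⟨h1, -, h3⟩
        rw [Finset.card_eq_zero] at h3
        subst h3
        simp at h1
      have h2 := hunit.2 0
      rw [Multiset.count_singleton_self, one_mul, hz] at h2
      have := Nat.one_le_two_pow (n := m + 1 + k - 0)
      omega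
    have hkL1 : k ≤ L + 1 := by omega
    have hle1 : L + 1 ≤ m + 1 + k := by omega
    have h01 : m + 1 + k - (L + 1) ≤ n := by omega
    obtain ⟨S₁, E₁, hS₁sub, hS₁bt, hS₁mem, hE₁, hcnt₁, hdeg₁, hleaf₁⟩ :=
      ih (L+1) h01 hkL1 hle1 _ E'' hS'' hI hdeg'' (u ++ [true])
        (leaf_extend hS hu true) (hunits'' true)
    have hfleaf : IsLeaf S₁ (u ++ [false]) := by
      have hc : ∀ c : Bool, u ++ [false] ++ [c] ∉ S₁ := by
        intro c hmem
        rcases hS₁mem _ hmem with h | h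
        · have hle := leaf_extend hS hu false
          cases c
          exacts [hle.2.2 h, hle.2.1 h]
        · exact not_snoc_prefix_snoc (by decide) h
      exact ⟨hS₁sub (leaf_extend hS hu false).1, hc true, hc false⟩
    have hch₁ : ∀ e, Multiset.count e E₁ ≠ Multiset.count e E'' → u ++ [true] ∈ e := by
      intro e hne
      obtain ⟨p, q, rfl, hp, hq, -⟩ := hcnt₁ e hne
      exact mem_pathFinset.mpr ⟨hp, hq⟩
    have hfunit : HasBottomUnits m k E₁ (u ++ [false]) {L + 1} :=
      hasBottomUnits_stable hch₁ (not_other_prefix (by decide) List.prefix_rfl) (hunits'' false)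
    obtain ⟨S₂, E₂, hS₂sub, hS₂bt, hS₂mem, hE₂, hcnt₂, hdeg₂, hleaf₂⟩ :=
      ih (L+1) h01 hkL1 hle1 S₁ E₁ hS₁bt hE₁ hdeg₁ (u ++ [false]) hfleaf hfunit
    have hch₂ : ∀ e, Multiset.count e E₂ ≠ Multiset.count e E₁ → u ++ [false] ∈ e := by
      intro e hne
      obtain ⟨p, q, rfl, hp, hq, -⟩ := hcnt₂ e hne
      exact mem_pathFinset.mpr ⟨hp, hq⟩
    refine ⟨S₂, E₂, (Finset.subset_union_left.trans hS₁sub).trans hS₂sub, hS₂bt, ?_, hE₂, ?_,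
      hdeg₂, ?_⟩
    · intro x hx
      rcases hS₂mem x hx with hx1 | hpre
      · rcases hS₁mem x hx1 with hx2 | hpre
        · rcases Finset.mem_union.mp hx2 with h | h
          · exact Or.inl h
          · right
            simp only [Finset.mem_insert, Finset.mem_singleton] at h
            rcases h with rfl | rfl <;> exact List.prefix_append _ _
        · exact Or.inr ((List.prefix_append u [true]).trans hpre)
      · exact Or.inr ((List.prefix_append u [false]).trans hpre)
    · intro e hne
      by_cases c1 : Multiset.count e E₂ = Multiset.count e E₁
      · by_cases c2 : Multiset.count e E₁ = Multiset.count e E''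
        · exact hcnt'' e (fun h => hne (c1.trans (c2.trans h)))
        · obtain ⟨p, q, he, hp, hq, hlen⟩ := hcnt₁ e c2
          simp only [List.length_append, List.length_singleton] at hlen
          exact ⟨p, q, he, prefix_of_prefix_snoc hp (by omega),
            (List.prefix_append u [true]).trans hq, by omega⟩
      · obtain ⟨p, q, he, hp, hq, hlen⟩ := hcnt₂ e c1
        simp only [List.length_append, List.length_singleton] at hlen
        exact ⟨p, q, he, prefix_of_prefix_snoc hp (by omega),
          (List.prefix_append u [false]).trans hq, by omega⟩
    · intro l hl hpre
      by_cases ht : u ++ [true] <+: l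
      · have hlS₁ : l ∈ S₁ := by
          rcases hS₂mem l hl.1 with h | h
          · exact h
          · exact absurd ht (not_other_prefix (by decide) h)
        have hleafS₁ : IsLeaf S₁ l :=
          ⟨hlS₁, fun h => hl.2.1 (hS₂sub h), fun h => hl.2.2 (hS₂sub h)⟩
        exact hasBottomUnits_stable hch₂ (not_other_prefix (by decide) ht)
          (hleaf₁ l hleafS₁ ht)
      · by_cases hf : u ++ [false] <+: l
        · exact hleaf₂ l hl hf
        · exfalso
          have hlu : l = u := by
            by_contra hne
            obtain ⟨b, hb⟩ := exists_snoc_prefix hpre hne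
            cases b
            exacts [hf hb, ht hb]
          subst hlu
          exact hl.2.1 (hS₂sub (hS₁sub (Finset.mem_union_right _ (by simp))))

lemma filter_eq_of_count_clause {E' E : Multiset (Finset (List Bool))} {u : List Bool}
    (hcnt : ∀ e : Finset (List Bool), Multiset.count e E' ≠ Multiset.count e E → u ∈ e) :
    E'.filter (fun e => u ∉ e) = E.filter (fun e => u ∉ e) := by
  apply Multiset.ext.mpr
  intro e
  rw [Multiset.count_filter, Multiset.count_filter]
  split_ifs with h
  · rfl
  · by_contra hne
    exact h (hcnt e hne)


theorem halve_unit' (m k L : ℕ) (hLk : k ≤ L) (hLm : L ≤ m + k)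
    (S : Finset (List Bool)) (E : Multiset (Finset (List Bool)))
    (hS : IsBinTree S) (hE : ∀ e ∈ E, InTree S e)
    (hdeg : ∀ v : List Bool, mDegree E v ≤ 2 * 2 ^ m)
    (u : List Bool) (hu : IsLeaf S u)
    (hunit : HasBottomUnits m k E u {L}) :
    (∃ E' : Multiset (Finset (List Bool)),
      (∀ e ∈ E', InTree (S ∪ {u ++ [true], u ++ [false]}) e) ∧
      (E'.filter (fun e => u ∉ e) = E.filter (fun e => u ∉ e)) ∧
      (∀ v : List Bool, mDegree E' v ≤ 2 * 2 ^ m) ∧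
      (∀ b : Bool, HasBottomUnits m k E' (u ++ [b]) {L + 1})) ∧
    (∃ (S' : Finset (List Bool)) (E' : Multiset (Finset (List Bool))),
      S ⊆ S' ∧ IsBinTree S' ∧ (∀ x ∈ S', x ∈ S ∨ u <+: x) ∧
      (∀ e ∈ E', InTree S' e) ∧
      (E'.filter (fun e => u ∉ e) = E.filter (fun e => u ∉ e)) ∧
      (∀ v : List Bool, mDegree E' v ≤ 2 * 2 ^ m) ∧
      (∀ l : List Bool, IsLeaf S' l → u <+: l →
        HasBottomUnits m k E' l {m + 1 + k})) := by
  constructor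
  · obtain ⟨E', hI, hcnt, hdeg', hunits⟩ := part1 m k L hLk hLm S E hS hE hdeg u hu hunit
    refine ⟨E', hI, filter_eq_of_count_clause ?_, hdeg', hunits⟩
    intro e hne
    obtain ⟨p, q, rfl, hp, hq, -⟩ := hcnt e hne
    exact mem_pathFinset.mpr ⟨hp, hq⟩
  · obtain ⟨S', E', h1, h2, h3, h4, hcnt, h6, h7⟩ :=
      part2aux m k (m + 1 + k - L) L le_rfl hLk (by omega) S E hS hE hdeg u hu hunit
    refine ⟨S', E', h1, h2, h3, h4, filter_eq_of_count_clause ?_, h6, h7⟩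
    intro e hne
    obtain ⟨p, q, rfl, hp, hq, -⟩ := hcnt e hne
    exact mem_pathFinset.mpr ⟨hp, hq⟩

/-- Halving a bottom unit: a bottom unit `U` of power `k` and length `L` with
`|U| ≥ 2` at a leaf `u` can be split into two halves, one in each new subtree,
and iterating this, the tree hypergraph can be extended at `u` so that every
full branch through `u` contains a single bottom hyperedge of size
`log₂ d + k + 1`; the maximum degree stays at most `2d`. -/
theorem halve_unit (m k L : ℕ) (hLk : k ≤ L) (hLm : L ≤ m + k)
    (S : Finset (List Bool)) (E : Multiset (Finset (List Bool)))
    (hS : IsBinTree S) (hE : ∀ e ∈ E, InTree S e)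
    (hdeg : ∀ v : List Bool, mDegree E v ≤ 2 * 2 ^ m)
    (u : List Bool) (hu : IsLeaf S u)
    (hunit : HasBottomUnits m k E u {L}) :
    (∃ E' : Multiset (Finset (List Bool)),
      (∀ e ∈ E', InTree (S ∪ {u ++ [true], u ++ [false]}) e) ∧
      (E'.filter (fun e => u ∉ e) = E.filter (fun e => u ∉ e)) ∧
      (∀ v : List Bool, mDegree E' v ≤ 2 * 2 ^ m) ∧
      (∀ b : Bool, HasBottomUnits m k E' (u ++ [b]) {L + 1})) ∧
    (∃ (S' : Finset (List Bool)) (E' : Multiset (Finset (List Bool))),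
      S ⊆ S' ∧ IsBinTree S' ∧ (∀ x ∈ S', x ∈ S ∨ u <+: x) ∧
      (∀ e ∈ E', InTree S' e) ∧
      (E'.filter (fun e => u ∉ e) = E.filter (fun e => u ∉ e)) ∧
      (∀ v : List Bool, mDegree E' v ≤ 2 * 2 ^ m) ∧
      (∀ l : List Bool, IsLeaf S' l → u <+: l →
        HasBottomUnits m k E' l {m + 1 + k})) := by
  exact halve_unit' m k L hLk hLm S E hS hE hdeg u hu hunit
end
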